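/- Every strongly self-contracted curve γ : I → ℝ^n is strictly self-contracted: for all t₁ < t₂ < t₃ in I, ‖γ(t₁) − γ(t₃)‖ > ‖γ(t₂) − γ(t₃)‖. -/

import Mathlib

/-!
Fix `t₃` and put `g τ = ‖γ τ - γ t₃‖`. If `τ < t₃` and points `t < τ` arbitrarily close to `τ` had
`g t ≤ g τ`, their unit secants would accumulate (by compactness of the sphere) at some
`q ∈ sec⁻(τ)`, and `q` would make a non-obtuse angle with `γ t₃ - γ τ`. But `q` lies in the interior
of the normal cone of `Ω(τ) ∋ γ t₃`, so that angle is obtuse. Hence `g` strictly decreases just to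
the left of every such `τ`, and a maximiser of the continuous `g` on `[t₁, t₂]` can only sit at `t₁`.
-/

open Set Metric Filter Topology RealInnerProductSpace

/-- The normal cone of a convex set `K` at a point `u₀`. -/
def normalCone {n : ℕ} (K : Set (EuclideanSpace ℝ (Fin n))) (u₀ : EuclideanSpace ℝ (Fin n)) :
    Set (EuclideanSpace ℝ (Fin n)) :=
  {v | ∀ u ∈ K, ⟪v, u - u₀⟫ ≤ 0}

/-- The set `sec⁻(τ)` of limits of backward unit secant vectors of the curve `γ` at `τ`. -/
def secMinus {n : ℕ} (I : Set ℝ) (γ : ℝ → EuclideanSpace ℝ (Fin n)) (τ : ℝ) :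
    Set (EuclideanSpace ℝ (Fin n)) :=
  {q | ‖q‖ = 1 ∧ ∃ t : ℕ → ℝ, (∀ k, t k ∈ I) ∧ (∀ k, t k < τ) ∧
    Tendsto t atTop (nhds τ) ∧
    Tendsto (fun k => ‖γ (t k) - γ τ‖⁻¹ • (γ (t k) - γ τ)) atTop (nhds q)}

/-- A curve `γ : I → ℝⁿ` is *strongly self-contracted* if it is continuous, injective, and
for every `τ ∈ I`, `sec⁻(τ)` is contained in the interior of the normal cone at `γ τ` of
the convex hull `Ω(τ)` of the tail `{γ t : t ∈ I, t ≥ τ}`. -/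
def StronglySelfContracted {n : ℕ} (I : Set ℝ) (γ : ℝ → EuclideanSpace ℝ (Fin n)) : Prop :=
  ContinuousOn γ I ∧ InjOn γ I ∧
  ∀ τ ∈ I, secMinus I γ τ ⊆
    interior (normalCone (convexHull ℝ (γ '' (I ∩ Ici τ))) (γ τ))

lemma norm_sub_lt_norm_sub_of_inner_neg {E : Type*} [NormedAddCommGroup E]
    [InnerProductSpace ℝ E] {x y p : E} (h : ⟪x - p, y - p⟫ < 0) : ‖p - y‖ < ‖x - y‖ := by
  have hsq : ‖p - y‖ ^ 2 < ‖x - y‖ ^ 2 := by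
    have hxy : x - y = (x - p) - (y - p) := by abel
    rw [hxy, norm_sub_sq_real (x - p), norm_sub_rev p y]
    nlinarith [sq_nonneg ‖x - p‖]
  exact lt_of_pow_lt_pow_left₀ 2 (norm_nonneg _) hsq

lemma inner_neg_of_mem_interior_normalCone {n : ℕ} {K : Set (EuclideanSpace ℝ (Fin n))}
    {u₀ v u : EuclideanSpace ℝ (Fin n)} (hv : v ∈ interior (normalCone K u₀)) (hu : u ∈ K)
    (hne : u ≠ u₀) : ⟪v, u - u₀⟫ < 0 := by
  have hpush : Tendsto (fun c : ℝ => v + c • (u - u₀)) (𝓝 0) (𝓝 v) := by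
    simpa using tendsto_const_nhds.add ((tendsto_id (x := 𝓝 (0 : ℝ))).smul_const (u - u₀))
  obtain ⟨c, hc, hcN⟩ := (hpush.eventually (isOpen_interior.mem_nhds hv)).exists_gt
  have hcu := interior_subset hcN u hu
  rw [inner_add_left, real_inner_smul_left, real_inner_self_eq_norm_sq] at hcu
  have hd : 0 < ‖u - u₀‖ := norm_pos_iff.mpr (sub_ne_zero.mpr hne)
  nlinarith [mul_pos hc (pow_pos hd 2)]

lemma exists_mem_secMinus_of_tendsto {n : ℕ} {I : Set ℝ} {γ : ℝ → EuclideanSpace ℝ (Fin n)}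
    {τ : ℝ} {t : ℕ → ℝ} (htI : ∀ k, t k ∈ I) (htτ : ∀ k, t k < τ)
    (ht : Tendsto t atTop (𝓝 τ)) (hne : ∀ k, γ (t k) ≠ γ τ) :
    ∃ q ∈ secMinus I γ τ, ∃ φ : ℕ → ℕ, StrictMono φ ∧
      Tendsto (fun k => ‖γ (t (φ k)) - γ τ‖⁻¹ • (γ (t (φ k)) - γ τ)) atTop (𝓝 q) := by
  have hsphere : ∀ k, ‖γ (t k) - γ τ‖⁻¹ • (γ (t k) - γ τ) ∈ sphere 0 1 := fun k => by
    rw [mem_sphere_zero_iff_norm, norm_smul, norm_inv, norm_norm,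
      inv_mul_cancel₀ (norm_ne_zero_iff.mpr (sub_ne_zero.mpr (hne k)))]
  obtain ⟨q, hq, φ, hφ, hlim⟩ := (isCompact_sphere 0 1).tendsto_subseq hsphere
  exact ⟨q, ⟨mem_sphere_zero_iff_norm.mp hq, t ∘ φ, fun k => htI _, fun k => htτ _,
    ht.comp hφ.tendsto_atTop, hlim⟩, φ, hφ, hlim⟩

lemma StronglySelfContracted.eventually_norm_sub_lt_left {n : ℕ} {I : Set ℝ}
    {γ : ℝ → EuclideanSpace ℝ (Fin n)} (hγ : StronglySelfContracted I γ) {τ s : ℝ}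
    (hτ : τ ∈ I) (hs : s ∈ I) (hτs : τ < s) :
    ∀ᶠ t in 𝓝[<] τ, t ∈ I → ‖γ τ - γ s‖ < ‖γ t - γ s‖ := by
  by_contra hcon
  obtain ⟨t, ht, hbad⟩ := exists_seq_forall_of_frequently
    (frequently_nhdsWithin_iff.mp (not_eventually.mp hcon))
  simp only [Classical.not_imp, not_lt] at hbad
  have hne : ∀ k, γ (t k) ≠ γ τ := fun k h => (hbad k).2.ne (hγ.2.1 (hbad k).1.1 hτ h)
  obtain ⟨q, hq, φ, -, hlim⟩ :=
    exists_mem_secMinus_of_tendsto (fun k => (hbad k).1.1) (fun k => (hbad k).2) ht hne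
  have hobtuse : ⟪q, γ s - γ τ⟫ < 0 :=
    inner_neg_of_mem_interior_normalCone (hγ.2.2 τ hτ hq)
      (subset_convexHull ℝ _ ⟨s, ⟨hs, hτs.le⟩, rfl⟩) fun h => hτs.ne' (hγ.2.1 hs hτ h)
  obtain ⟨k, hk⟩ := ((hlim.inner tendsto_const_nhds).eventually_lt_const hobtuse).exists
  rw [real_inner_smul_left] at hk
  have hsecant : ⟪γ (t (φ k)) - γ τ, γ s - γ τ⟫ < 0 :=
    neg_of_mul_neg_right hk (inv_nonneg.mpr (norm_nonneg _))
  exact (norm_sub_lt_norm_sub_of_inner_neg hsecant).not_ge (hbad (φ k)).1.2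

lemma lt_of_forall_eventually_lt_left {β : Type*} [LinearOrder β] [TopologicalSpace β]
    [OrderClosedTopology β] {f : ℝ → β} {a b : ℝ} (hab : a < b)
    (hf : ContinuousOn f (Icc a b)) (hleft : ∀ τ ∈ Ioc a b, ∀ᶠ t in 𝓝[<] τ, f τ < f t) :
    f b < f a := by
  obtain ⟨m, hm, hmax⟩ := isCompact_Icc.exists_isMaxOn (nonempty_Icc.mpr hab.le) hf
  have hma : m = a := by
    by_contra hne
    have hm' : m ∈ Ioc a b := ⟨lt_of_le_of_ne hm.1 (Ne.symm hne), hm.2⟩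
    obtain ⟨t, hlt, ht⟩ := ((hleft m hm').and (Ioo_mem_nhdsLT hm'.1)).exists
    exact hlt.not_ge (hmax ⟨ht.1.le, ht.2.le.trans hm.2⟩)
  subst hma
  refine lt_of_le_of_ne (hmax (right_mem_Icc.mpr hab.le)) fun heq => ?_
  obtain ⟨t, hlt, ht⟩ := ((hleft b ⟨hab, le_rfl⟩).and (Ioo_mem_nhdsLT hab)).exists
  exact hlt.not_ge (heq ▸ hmax ⟨ht.1.le, ht.2.le⟩)

/-- Every strongly self-contracted curve is strictly self-contracted: for `t₁ < t₂ < t₃`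
in `I`, `‖γ t₁ - γ t₃‖ > ‖γ t₂ - γ t₃‖`. -/
theorem stronglySelfContracted_strictly {n : ℕ} (I : Set ℝ) (hI : I.OrdConnected)
    (γ : ℝ → EuclideanSpace ℝ (Fin n)) (hγ : StronglySelfContracted I γ) :
    ∀ t₁ ∈ I, ∀ t₂ ∈ I, ∀ t₃ ∈ I, t₁ < t₂ → t₂ < t₃ →
      ‖γ t₂ - γ t₃‖ < ‖γ t₁ - γ t₃‖ := by
  intro t₁ ht₁ t₂ ht₂ t₃ ht₃ h12 h23
  have hsub : Icc t₁ t₂ ⊆ I := hI.out ht₁ ht₂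
  refine lt_of_forall_eventually_lt_left h12 (((hγ.1.mono hsub).sub continuousOn_const).norm)
    fun τ hτ => ?_
  filter_upwards [hγ.eventually_norm_sub_lt_left (hsub (Ioc_subset_Icc_self hτ)) ht₃
    (hτ.2.trans_lt h23), Ioo_mem_nhdsLT hτ.1] with t hdist ht
  exact hdist (hsub ⟨ht.1.le, ht.2.le.trans hτ.2⟩)
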